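/- arXiv:1408.6978 — 2 statements merged into one kernel-verified Lean document; each statement's English description precedes it below -/
import Mathlib

section
/- Let A be an n×n matrix over ZMod 2 that is symmetric, and let p ≠ q be two indices with A p q = 1. Let A' be the (n+1)×(n+1) block matrix A' = fromBlocks 1 r c (A + E_{pp} + E_{qq} + E_{pq} + E_{qp}), where r is the row vector e_p + e_q and c is the column vector e_p + e_q. (A' is the mod-2 intersection matrix after blowing up at the intersection point of E_p and E_q.) Then rank A' = rank A + 1; equivalently, the corank is preserved: (n+1) − rank A' = n − rank A. -/
/-!
Pivoting on the invertible corner entry `1` gives `rank A' = 1 + rank S` for the Schur complement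
`S = (A + E_pp + E_qq + E_pq + E_qp) - c r`. The outer product `c r = (e_p + e_q)(e_p + e_q)ᵀ` is
exactly `E_pp + E_qq + E_pq + E_qp`, so `S = A`.
-/

open Matrix

theorem Submodule.finrank_prod {K M N : Type*} [Field K] [AddCommGroup M] [AddCommGroup N]
    [Module K M] [Module K N] (p : Submodule K M) (q : Submodule K N)
    [FiniteDimensional K p] [FiniteDimensional K q] :
    Module.finrank K (p.prod q) = Module.finrank K p + Module.finrank K q := by
  have hinj : Function.Injective (p.subtype.prodMap q.subtype) :=
    Prod.map_injective.2 ⟨p.injective_subtype, q.injective_subtype⟩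
  rw [← Module.finrank_prod, ← LinearMap.finrank_range_of_inj hinj, LinearMap.range_prodMap,
    Submodule.range_subtype, Submodule.range_subtype]

theorem Matrix.rank_fromBlocks_zero_zero {K m n l o : Type*} [Field K] [Fintype n] [Fintype o]
    (B : Matrix m n K) (D : Matrix l o K) :
    (fromBlocks B 0 0 D).rank = B.rank + D.rank := by
  let e₁ := LinearEquiv.sumArrowLequivProdArrow n o K K
  let e₂ := LinearEquiv.sumArrowLequivProdArrow m l K K
  have hconj : (fromBlocks B 0 0 D).mulVecLin
      = e₂.symm.toLinearMap ∘ₗ B.mulVecLin.prodMap D.mulVecLin ∘ₗ e₁.toLinearMap := by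
    ext v i
    rcases i with i | i <;> simp [e₁, e₂, fromBlocks_mulVec] <;> rfl
  rw [rank, hconj, LinearMap.range_comp, LinearMap.range_comp, LinearEquiv.range,
    Submodule.map_top, LinearEquiv.finrank_map_eq, LinearMap.range_prodMap,
    Submodule.finrank_prod, rank, rank]

theorem Matrix.rank_fromBlocks_of_invertible₁₁ {K l m n : Type*} [Field K]
    [Fintype l] [Fintype m] [Fintype n] [DecidableEq l] [DecidableEq m] [DecidableEq n]
    (A : Matrix m m K) (B : Matrix m n K) (C : Matrix l m K) (D : Matrix l n K) [Invertible A] :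
    (fromBlocks A B C D).rank = A.rank + (D - C * ⅟A * B).rank := by
  have hL : IsUnit (fromBlocks 1 0 (C * ⅟A) 1 : Matrix (m ⊕ l) (m ⊕ l) K).det := by simp
  have hU : IsUnit (fromBlocks 1 (⅟A * B) 0 1 : Matrix (m ⊕ n) (m ⊕ n) K).det := by simp
  rw [fromBlocks_eq_of_invertible₁₁ A B C D, rank_mul_eq_left_of_isUnit_det _ _ hU,
    rank_mul_eq_right_of_isUnit_det _ _ hL, rank_fromBlocks_zero_zero]

theorem Matrix.replicateCol_mul_replicateRow_single_add_single {R n ι : Type*} [Semiring R]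
    [DecidableEq n] [Unique ι] (p q : n) :
    replicateCol ι (Pi.single p 1 + Pi.single q 1 : n → R)
        * replicateRow ι (Pi.single p 1 + Pi.single q 1 : n → R)
      = single p p 1 + single q q 1 + single p q 1 + single q p 1 := by
  rw [← vecMulVec_eq, add_vecMulVec, vecMulVec_add, vecMulVec_add,
    ← single_eq_single_vecMulVec_single, ← single_eq_single_vecMulVec_single,
    ← single_eq_single_vecMulVec_single, ← single_eq_single_vecMulVec_single]
  abel

theorem blowup_on_two_curves_rank_general {n : ℕ} (A : Matrix (Fin n) (Fin n) (ZMod 2))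
    (p q : Fin n) :
    (Matrix.fromBlocks (1 : Matrix (Fin 1) (Fin 1) (ZMod 2))
      (Matrix.of fun _ j => (Pi.single p 1 : Fin n → ZMod 2) j + (Pi.single q 1 : Fin n → ZMod 2) j)
      (Matrix.of fun i _ => (Pi.single p 1 : Fin n → ZMod 2) i + (Pi.single q 1 : Fin n → ZMod 2) i)
      (A + Matrix.single p p 1 + Matrix.single q q 1
         + Matrix.single p q 1 + Matrix.single q p 1)).rank
      = A.rank + 1 := by
  let : Invertible (1 : Matrix (Fin 1) (Fin 1) (ZMod 2)) := invertibleOne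
  have hCB :
      (of fun i (_ : Fin 1) =>
          (Pi.single p 1 : Fin n → ZMod 2) i + (Pi.single q 1 : Fin n → ZMod 2) i)
        * (of fun (_ : Fin 1) j =>
          (Pi.single p 1 : Fin n → ZMod 2) j + (Pi.single q 1 : Fin n → ZMod 2) j)
      = single p p 1 + single q q 1 + single p q 1 + single q p 1 :=
    replicateCol_mul_replicateRow_single_add_single p q
  rw [rank_fromBlocks_of_invertible₁₁, invOf_one, Matrix.mul_one, hCB, rank_one,
    Fintype.card_fin, add_comm 1]
  congr 2
  abel

/-- Blowing up at the intersection point of two exceptional curves `E_p` and `E_q`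
increases the rank of the mod-2 intersection matrix by exactly one, hence preserves
the corank. -/
theorem blowup_on_two_curves_rank {n : ℕ} (A : Matrix (Fin n) (Fin n) (ZMod 2))
    (hA : A.IsSymm) (p q : Fin n) (hpq : p ≠ q) (hApq : A p q = 1) :
    (Matrix.fromBlocks (1 : Matrix (Fin 1) (Fin 1) (ZMod 2))
      (Matrix.of fun _ j => (Pi.single p 1 : Fin n → ZMod 2) j + (Pi.single q 1 : Fin n → ZMod 2) j)
      (Matrix.of fun i _ => (Pi.single p 1 : Fin n → ZMod 2) i + (Pi.single q 1 : Fin n → ZMod 2) i)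
      (A + Matrix.single p p 1 + Matrix.single q q 1
         + Matrix.single p q 1 + Matrix.single q p 1)).rank
      = A.rank + 1 :=
  blowup_on_two_curves_rank_general A p q
end

section
/- Contraction C3 preserves the intersection data: let A be an m×m symmetric matrix over ZMod 2 (with m ≥ 4) and let u, v, p, r be four pairwise distinct indices such that A u u = 0, A v v = 0, A u v = 1, A u p = 1, A u k = 0 for every k not in {u,v,p}, A v r = 1, and A v k = 0 for every k not in {u,v,r} (i.e., u and v are adjacent even vertices, each of valency 2, attached respectively to p and to r). Let B be the (m−2)×(m−2) matrix obtained from A by deleting the rows and columns indexed by u and v and adding 1 to the entries (p,r) and (r,p). Then det B = det A and rank A = rank B + 2 (so the corank is preserved). -/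
/-!
Put `u, v` first. The `2 × 2` pivot block of `A` on `u, v` is `σ = !![0, 1; 1, 0]`, which is its
own inverse and has determinant `1` over `ZMod 2`, so the Schur complement formulas give
`det A = det S` and `rank A = 2 + rank S` for the Schur complement `S = D - C σ B`.
Since the rows of `u` and `v` off the pivot are the unit vectors at `p` and `r`, the correction
`C σ B` is exactly `single p r 1 + single r p 1`, and in characteristic two `S` is the contracted
matrix.
-/

open Matrix

def Submodule.prodEquiv {R M N : Type*} [Semiring R] [AddCommMonoid M] [AddCommMonoid N]
    [Module R M] [Module R N] (p : Submodule R M) (q : Submodule R N) :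
    p.prod q ≃ₗ[R] p × q where
  toFun x := (⟨x.1.1, x.2.1⟩, ⟨x.1.2, x.2.2⟩)
  invFun y := ⟨(y.1, y.2), y.1.2, y.2.2⟩
  map_add' _ _ := rfl
  map_smul' _ _ := rfl

namespace Matrix

variable {K : Type*} [Field K] {l m n o : Type*} [Fintype m] [Fintype o]

theorem mulVecLin_fromBlocks_zero_zero (A : Matrix l m K) (D : Matrix n o K) :
    (fromBlocks A 0 0 D).mulVecLin =
      (LinearEquiv.sumArrowLequivProdArrow l n K K).symm.toLinearMap ∘ₗ
        A.mulVecLin.prodMap D.mulVecLin ∘ₗ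
          (LinearEquiv.sumArrowLequivProdArrow m o K K).toLinearMap := by
  ext x (i | i) <;>
    simp [fromBlocks_mulVec, LinearEquiv.sumArrowLequivProdArrow, Equiv.sumArrowEquivProdArrow]

theorem rank_fromBlocks_zero_zero_s6 (A : Matrix l m K) (D : Matrix n o K) :
    (fromBlocks A 0 0 D).rank = A.rank + D.rank := by
  rw [rank, mulVecLin_fromBlocks_zero_zero, LinearMap.range_comp, LinearMap.range_comp,
    LinearEquiv.range, Submodule.map_top, LinearEquiv.finrank_map_eq, LinearMap.range_prodMap,
    (Submodule.prodEquiv _ _).finrank_eq, Module.finrank_prod]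
  rfl

theorem rank_fromBlocks_of_invertible₁₁_s6 [DecidableEq m] [DecidableEq o] (A : Matrix m m K)
    (B : Matrix m o K) (C : Matrix o m K) (D : Matrix o o K) [Invertible A] :
    (fromBlocks A B C D).rank = Fintype.card m + (D - C * ⅟A * B).rank := by
  rw [fromBlocks_eq_of_invertible₁₁, rank_mul_eq_left_of_isUnit_det,
    rank_mul_eq_right_of_isUnit_det, rank_fromBlocks_zero_zero_s6,
    rank_of_isUnit A (isUnit_of_invertible A)]
  all_goals simp

end Matrix

def Equiv.finTwoSumComplPair {ι : Type*} [DecidableEq ι] {u v : ι} (huv : u ≠ v) :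
    Fin 2 ⊕ {k : ι // k ≠ u ∧ k ≠ v} ≃ ι where
  toFun := Sum.elim ![u, v] Subtype.val
  invFun k := if hu : k = u then .inl 0 else if hv : k = v then .inl 1 else .inr ⟨k, hu, hv⟩
  left_inv := by
    rintro (i | k)
    · fin_cases i <;> simp [huv.symm]
    · simp [k.2.1, k.2.2]
  right_inv k := by
    by_cases hu : k = u
    · simp [hu]
    · by_cases hv : k = v <;> simp [hu, hv, huv.symm]

theorem Subtype.restrict_eq_single {ι R : Type*} [DecidableEq ι] [Zero R] {P : ι → Prop}
    {f : ι → R} (p : Subtype P) (hf : ∀ k, P k → k ≠ p → f k = 0) :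
    Subtype.restrict P f = Pi.single p (f p) := by
  funext k
  by_cases hk : k = p
  · simp [hk]
  · rw [Pi.single_eq_of_ne hk, restrict_apply, hf k k.2 (fun h => hk (Subtype.ext h))]

namespace Matrix

variable {ι : Type*} [DecidableEq ι] {u v : ι}

theorem submatrix_finTwoSumComplPair {R : Type*} (huv : u ≠ v) (A : Matrix ι ι R) :
    A.submatrix (Equiv.finTwoSumComplPair huv) (Equiv.finTwoSumComplPair huv) =
      fromBlocks (A.submatrix ![u, v] ![u, v]) (A.submatrix ![u, v] Subtype.val)
        (A.submatrix Subtype.val ![u, v]) (A.submatrix Subtype.val Subtype.val) := by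
  ext (i | i) (j | j) <;> rfl

theorem schur_complement_eq_add_single_add_single {A : Matrix ι ι (ZMod 2)} {p r : ι}
    (hA : A.IsSymm) (hp : p ≠ u ∧ p ≠ v) (hr : r ≠ u ∧ r ≠ v)
    (hAup : A u p = 1) (huval : ∀ k, k ≠ u → k ≠ v → k ≠ p → A u k = 0)
    (hAvr : A v r = 1) (hvval : ∀ k, k ≠ u → k ≠ v → k ≠ r → A v k = 0) :
    A.submatrix (Subtype.val : {k // k ≠ u ∧ k ≠ v} → ι) Subtype.val -
        A.submatrix Subtype.val ![u, v] * (!![0, 1; 1, 0] : Matrix (Fin 2) (Fin 2) (ZMod 2)) *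
          A.submatrix ![u, v] Subtype.val =
      A.submatrix Subtype.val Subtype.val
        + single (⟨p, hp⟩ : {k // k ≠ u ∧ k ≠ v})
            (⟨r, hr⟩ : {k // k ≠ u ∧ k ≠ v}) 1
        + single (⟨r, hr⟩ : {k // k ≠ u ∧ k ≠ v})
            (⟨p, hp⟩ : {k // k ≠ u ∧ k ≠ v}) 1 := by
  ext k l
  have hu := congrFun (Subtype.restrict_eq_single (P := fun k => k ≠ u ∧ k ≠ v) ⟨p, hp⟩
    fun k hk => huval k hk.1 hk.2)
  have hv := congrFun (Subtype.restrict_eq_single (P := fun k => k ≠ u ∧ k ≠ v) ⟨r, hr⟩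
    fun k hk => hvval k hk.1 hk.2)
  simp only [Subtype.restrict_apply, hAup, hAvr] at hu hv
  rw [sub_apply, add_apply, add_apply, CharTwo.sub_eq_add, add_assoc]
  congr 1
  simp only [mul_apply, Fin.sum_univ_two, submatrix_apply]
  simp [hA.apply u k.1, hA.apply v k.1, hu, hv, single_eq_single_vecMulVec_single,
    vecMulVec_apply, add_comm]

end Matrix

theorem contraction_C3_general {m : ℕ} (A : Matrix (Fin m) (Fin m) (ZMod 2))
    (hA : A.IsSymm) (u v p r : Fin m)
    (huv : u ≠ v) (hup : u ≠ p) (hur : u ≠ r) (hvp : v ≠ p) (hvr : v ≠ r)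
    (huu : A u u = 0) (hvv : A v v = 0) (hAuv : A u v = 1)
    (hAup : A u p = 1) (huval : ∀ k, k ≠ u → k ≠ v → k ≠ p → A u k = 0)
    (hAvr : A v r = 1) (hvval : ∀ k, k ≠ u → k ≠ v → k ≠ r → A v k = 0) :
    (A.submatrix (Subtype.val : {k : Fin m // k ≠ u ∧ k ≠ v} → Fin m) Subtype.val
        + Matrix.single (⟨p, hup.symm, hvp.symm⟩ : {k : Fin m // k ≠ u ∧ k ≠ v})
            (⟨r, hur.symm, hvr.symm⟩ : {k : Fin m // k ≠ u ∧ k ≠ v}) 1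
        + Matrix.single (⟨r, hur.symm, hvr.symm⟩ : {k : Fin m // k ≠ u ∧ k ≠ v})
            (⟨p, hup.symm, hvp.symm⟩ : {k : Fin m // k ≠ u ∧ k ≠ v}) 1).det = A.det ∧
      A.rank = (A.submatrix (Subtype.val : {k : Fin m // k ≠ u ∧ k ≠ v} → Fin m) Subtype.val
        + Matrix.single (⟨p, hup.symm, hvp.symm⟩ : {k : Fin m // k ≠ u ∧ k ≠ v})
            (⟨r, hur.symm, hvr.symm⟩ : {k : Fin m // k ≠ u ∧ k ≠ v}) 1
        + Matrix.single (⟨r, hur.symm, hvr.symm⟩ : {k : Fin m // k ≠ u ∧ k ≠ v})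
            (⟨p, hup.symm, hvp.symm⟩ : {k : Fin m // k ≠ u ∧ k ≠ v}) 1).rank + 2 := by
  have hschur := A.schur_complement_eq_add_single_add_single hA ⟨hup.symm, hvp.symm⟩
    ⟨hur.symm, hvr.symm⟩ hAup huval hAvr hvval
  set σ : Matrix (Fin 2) (Fin 2) (ZMod 2) := !![0, 1; 1, 0]
  have hσσ : σ * σ = 1 := by decide
  let : Invertible σ := invertibleOfRightInverse σ σ hσσ
  have hpivot : A.submatrix ![u, v] ![u, v] = σ := by
    ext i j
    fin_cases i <;> fin_cases j <;> simp [σ, huu, hvv, hAuv, hA.apply u v]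
  have hblocks := A.submatrix_finTwoSumComplPair huv
  rw [hpivot] at hblocks
  rw [← invOf_eq_right_inv hσσ] at hschur
  constructor
  · rw [← det_submatrix_equiv_self (Equiv.finTwoSumComplPair huv) A, hblocks, det_fromBlocks₁₁,
      hschur, show σ.det = 1 by decide, one_mul]
  · rw [← rank_submatrix A (Equiv.finTwoSumComplPair huv) (Equiv.finTwoSumComplPair huv),
      hblocks, rank_fromBlocks_of_invertible₁₁_s6, hschur, Fintype.card_fin, add_comm]

/-- Contraction C3: removing two adjacent even vertices `u` and `v`, each of valency 2,
attached respectively to `p` and to `r` (delete the rows and columns of `u` and `v` and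
join `p` and `r` by an edge) preserves the determinant and drops the rank of the mod-2
intersection matrix by exactly two (so the corank is preserved). -/
theorem contraction_C3 {m : ℕ} (hm : 4 ≤ m) (A : Matrix (Fin m) (Fin m) (ZMod 2))
    (hA : A.IsSymm) (u v p r : Fin m)
    (huv : u ≠ v) (hup : u ≠ p) (hur : u ≠ r) (hvp : v ≠ p) (hvr : v ≠ r) (hpr : p ≠ r)
    (huu : A u u = 0) (hvv : A v v = 0) (hAuv : A u v = 1)
    (hAup : A u p = 1) (huval : ∀ k, k ≠ u → k ≠ v → k ≠ p → A u k = 0)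
    (hAvr : A v r = 1) (hvval : ∀ k, k ≠ u → k ≠ v → k ≠ r → A v k = 0) :
    (A.submatrix (Subtype.val : {k : Fin m // k ≠ u ∧ k ≠ v} → Fin m) Subtype.val
        + Matrix.single (⟨p, hup.symm, hvp.symm⟩ : {k : Fin m // k ≠ u ∧ k ≠ v})
            (⟨r, hur.symm, hvr.symm⟩ : {k : Fin m // k ≠ u ∧ k ≠ v}) 1
        + Matrix.single (⟨r, hur.symm, hvr.symm⟩ : {k : Fin m // k ≠ u ∧ k ≠ v})
            (⟨p, hup.symm, hvp.symm⟩ : {k : Fin m // k ≠ u ∧ k ≠ v}) 1).det = A.det ∧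
      A.rank = (A.submatrix (Subtype.val : {k : Fin m // k ≠ u ∧ k ≠ v} → Fin m) Subtype.val
        + Matrix.single (⟨p, hup.symm, hvp.symm⟩ : {k : Fin m // k ≠ u ∧ k ≠ v})
            (⟨r, hur.symm, hvr.symm⟩ : {k : Fin m // k ≠ u ∧ k ≠ v}) 1
        + Matrix.single (⟨r, hur.symm, hvr.symm⟩ : {k : Fin m // k ≠ u ∧ k ≠ v})
            (⟨p, hup.symm, hvp.symm⟩ : {k : Fin m // k ≠ u ∧ k ≠ v}) 1).rank + 2 :=
  contraction_C3_general A hA u v p r huv hup hur hvp hvr huu hvv hAuv hAup huval hAvr hvval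
end
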